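/- In any local swap equilibrium of a local 2-type Swap Schelling Game on a 2×h 4-neighbor grid with h ≥ 3, if x agents have utility 0 then at least x agents have utility at least 2/3; consequently the average utility is at least 1/3 and the Local Price of Anarchy of 2×h 4-grids is at most 3. -/

import Mathlib

/-!
If agent `i` has utility `0`, all its neighbours carry the other colour. On the `2 × h` grid
with `h ≥ 3` every vertex has a neighbour of degree `3`; let `j` be the agent there. The swap of
`i` and `j` is not profitable, so either `i` would still be isolated at `j`'s position, which
forces all neighbours of `j` but `i` to share `j`'s colour, or `j` would not gain by moving to
`i`'s position, where all neighbours but one have its colour. Since `deg j = 3 < 2 deg i`, the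
second case also forces `i` to be the only unlike neighbour of `j`. Hence `j` has utility
`2/3` and determines `i`, which gives the injection. As degrees are at most `3`, every
nonzero utility is at least `1/3`, so the average utility is at least `1/3`, while the welfare
of any placement is at most `n`.
-/

open SimpleGraph Finset
open scoped Classical

noncomputable def ssgUtil {V A : Type*} [Fintype V] [DecidableEq V]
    (G : SimpleGraph V) [DecidableRel G.Adj]
    {k : ℕ} (c : A → Fin k) (σ : A ≃ V) (i : A) : ℚ :=
  (((G.neighborFinset (σ i)).filter (fun v => c (σ.symm v) = c i)).card : ℚ) /
    (G.degree (σ i) : ℚ)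

def ssgSwap {V A : Type*} [DecidableEq V] (σ : A ≃ V) (i j : A) : A ≃ V :=
  σ.trans (Equiv.swap (σ i) (σ j))

def ssgProfitable {V A : Type*} [Fintype V] [DecidableEq V]
    (G : SimpleGraph V) [DecidableRel G.Adj]
    {k : ℕ} (c : A → Fin k) (σ : A ≃ V) (i j : A) : Prop :=
  c i ≠ c j ∧
    ssgUtil G c σ i < ssgUtil G c (ssgSwap σ i j) i ∧
    ssgUtil G c σ j < ssgUtil G c (ssgSwap σ i j) j

def ssgEquilibrium {V A : Type*} [Fintype V] [DecidableEq V]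
    (G : SimpleGraph V) [DecidableRel G.Adj]
    {k : ℕ} (c : A → Fin k) (σ : A ≃ V) : Prop :=
  ∀ i j : A, ¬ ssgProfitable G c σ i j

def ssgLocalEquilibrium {V A : Type*} [Fintype V] [DecidableEq V]
    (G : SimpleGraph V) [DecidableRel G.Adj]
    {k : ℕ} (c : A → Fin k) (σ : A ≃ V) : Prop :=
  ∀ i j : A, G.Adj (σ i) (σ j) → ¬ ssgProfitable G c σ i j

noncomputable def ssgWelfare {V A : Type*} [Fintype V] [DecidableEq V] [Fintype A]
    (G : SimpleGraph V) [DecidableRel G.Adj]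
    {k : ℕ} (c : A → Fin k) (σ : A ≃ V) : ℚ :=
  ∑ i : A, ssgUtil G c σ i

noncomputable def ssgPhi {V A : Type*} [Fintype V] [DecidableEq V]
    (G : SimpleGraph V) [DecidableRel G.Adj]
    {k : ℕ} (c : A → Fin k) (σ : A ≃ V) : ℕ :=
  (G.edgeFinset.filter (fun e => ∀ u ∈ e, ∀ v ∈ e, c (σ.symm u) = c (σ.symm v))).card


def grid4 (l h : ℕ) : SimpleGraph (Fin l × Fin h) where
  Adj p q := Nat.dist p.1.val q.1.val + Nat.dist p.2.val q.2.val = 1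
  symm := by
    constructor
    intro p q hpq
    rwa [Nat.dist_comm p.1.val, Nat.dist_comm p.2.val] at hpq
  loopless := by constructor; intro p hp; simp [Nat.dist_self] at hp

instance (l h : ℕ) : DecidableRel (grid4 l h).Adj :=
  fun p q => inferInstanceAs (Decidable
    (Nat.dist p.1.val q.1.val + Nat.dist p.2.val q.2.val = 1))

theorem grid4_eq_boxProd (l h : ℕ) : grid4 l h = pathGraph l □ pathGraph h := by
  ext p q
  simp only [boxProd_adj, pathGraph_adj, Fin.ext_iff]
  change Nat.dist _ _ + Nat.dist _ _ = 1 ↔ _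
  simp only [Nat.dist]
  omega

theorem pathGraph_degree_le_two {n : ℕ} (b : Fin n) : (pathGraph n).degree b ≤ 2 :=
  calc (pathGraph n).degree b
      ≤ #({b.val - 1, b.val + 1} : Finset ℕ) := by
        rw [← card_neighborFinset_eq_degree]
        refine card_le_card_of_injOn Fin.val (fun a ha => ?_) Fin.val_injective.injOn
        simp only [coe_neighborFinset, mem_neighborSet, pathGraph_adj,
          coe_insert, coe_singleton, Set.mem_insert_iff, Set.mem_singleton_iff] at ha ⊢
        omega
    _ ≤ 2 := card_le_two

theorem pathGraph_degree_pos {n : ℕ} (hn : 2 ≤ n) (b : Fin n) : 0 < (pathGraph n).degree b :=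
  have : Nontrivial (Fin n) := Fin.nontrivial_iff_two_le.2 hn
  (pathGraph_preconnected n).degree_pos_of_nontrivial b

theorem pathGraph_degree_eq_two {n : ℕ} {b : Fin n} (hb₀ : 0 < b.val) (hb₁ : b.val + 1 < n) :
    (pathGraph n).degree b = 2 := by
  refine le_antisymm (pathGraph_degree_le_two b) ?_
  calc 2 = #({⟨b.val - 1, by omega⟩, ⟨b.val + 1, hb₁⟩} : Finset (Fin n)) := by
        rw [card_pair]; simp [Fin.ext_iff]
    _ ≤ (pathGraph n).degree b := by
        rw [← card_neighborFinset_eq_degree]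
        refine card_le_card fun a ha => ?_
        simp only [mem_insert, mem_singleton] at ha
        rw [mem_neighborFinset, pathGraph_adj]
        rcases ha with rfl | rfl
        · simp; omega
        · simp

theorem grid4_two_degree {h : ℕ} (v : Fin 2 × Fin h) :
    (grid4 2 h).degree v = 1 + (pathGraph h).degree v.2 := by
  have hpath : (pathGraph 2).degree v.1 = 1 := by
    convert complete_graph_degree v.1
    · exact pathGraph_two_eq_top
    · simp
  rw [← hpath]
  convert degree_boxProd (G := pathGraph 2) (H := pathGraph h) v
  exact grid4_eq_boxProd 2 h

theorem grid4_two_degree_le_three {h : ℕ} (v : Fin 2 × Fin h) : (grid4 2 h).degree v ≤ 3 := by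
  have := pathGraph_degree_le_two v.2
  rw [grid4_two_degree]; omega

theorem two_le_grid4_two_degree {h : ℕ} (hh : 2 ≤ h) (v : Fin 2 × Fin h) :
    2 ≤ (grid4 2 h).degree v := by
  have := pathGraph_degree_pos hh v.2
  rw [grid4_two_degree]; omega

theorem exists_grid4_two_adj_degree_eq_three {h : ℕ} (hh : 3 ≤ h) (v : Fin 2 × Fin h) :
    ∃ u, (grid4 2 h).Adj v u ∧ (grid4 2 h).degree u = 3 := by
  suffices ∃ u : Fin 2 × Fin h, (grid4 2 h).Adj v u ∧ 0 < u.2.val ∧ u.2.val + 1 < h by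
    obtain ⟨u, hvu, hu₀, hu₁⟩ := this
    exact ⟨u, hvu, by rw [grid4_two_degree, pathGraph_degree_eq_two hu₀ hu₁]⟩
  simp only [grid4_eq_boxProd, boxProd_adj, pathGraph_adj, Prod.exists]
  obtain ⟨a, b⟩ := v
  by_cases hb₀ : b.val = 0
  · exact ⟨a, ⟨1, by omega⟩, by simp; omega⟩
  by_cases hb₁ : b.val + 1 = h
  · exact ⟨a, ⟨h - 2, by omega⟩, by simp; omega⟩
  · exact ⟨1 - a, b, by simp; omega⟩

theorem card_div_three_le_sum {ι : Type*} [Fintype ι] (u : ι → ℚ)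
    (hu : ∀ i, u i ≠ 0 → 1 / 3 ≤ u i) (hcard : #{i | u i = 0} ≤ #{i | 2 / 3 ≤ u i}) :
    (Fintype.card ι : ℚ) / 3 ≤ ∑ i, u i := by
  -- `u - 1/3` is `≥ 1/3` where `2/3 ≤ u`, `≥ -1/3` where `u = 0`, and `≥ 0` elsewhere
  have hpt : ∀ i, 1 / 3 + (if 2 / 3 ≤ u i then 1 / 3 else 0) - (if u i = 0 then 1 / 3 else 0)
      ≤ u i := by
    intro i
    by_cases h0 : u i = 0
    · norm_num [h0]
    · have := hu i h0
      split_ifs <;> linarith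
  have hcard' : (#{i | u i = 0} : ℚ) ≤ #{i | 2 / 3 ≤ u i} := by exact_mod_cast hcard
  calc (Fintype.card ι : ℚ) / 3
      ≤ Fintype.card ι / 3 + (#{i | 2 / 3 ≤ u i} - #{i | u i = 0}) / 3 := by linarith
    _ = ∑ i, (1 / 3 + (if 2 / 3 ≤ u i then 1 / 3 else 0) - (if u i = 0 then 1 / 3 else 0)) := by
        simp [sum_add_distrib, sum_sub_distrib, sum_ite]
        ring
    _ ≤ ∑ i, u i := sum_le_sum fun i _ => hpt i

section Swap

variable {V A : Type*} [DecidableEq V] {σ : A ≃ V} {i j : A}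

theorem ssgSwap_apply_left : ssgSwap σ i j i = σ j := by
  simp [ssgSwap]

theorem ssgSwap_apply_right : ssgSwap σ i j j = σ i := by
  simp [ssgSwap]

theorem ssgSwap_symm_apply_of_ne {v : V} (hi : v ≠ σ i) (hj : v ≠ σ j) :
    (ssgSwap σ i j).symm v = σ.symm v := by
  simp [ssgSwap, Equiv.swap_apply_of_ne_of_ne hi hj]

end Swap

section SwapGame

variable {V A : Type*} [Fintype V] [DecidableEq V] (G : SimpleGraph V) [DecidableRel G.Adj]
  {k : ℕ} (c : A → Fin k) (σ : A ≃ V)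

def ssgOtherColorNbrs (i : A) : Finset V :=
  (G.neighborFinset (σ i)).filter (fun v => c (σ.symm v) ≠ c i)

variable {G c σ}

theorem ssgUtil_nonneg (i : A) : 0 ≤ ssgUtil G c σ i := by
  unfold ssgUtil; positivity

theorem ssgUtil_le_one (i : A) : ssgUtil G c σ i ≤ 1 := by
  refine div_le_one_of_le₀ ?_ (Nat.cast_nonneg _)
  rw [← card_neighborFinset_eq_degree]
  exact_mod_cast card_filter_le _ _

theorem ssgUtil_eq_zero_iff {i : A} :
    ssgUtil G c σ i = 0 ↔ ∀ v, G.Adj (σ i) v → c (σ.symm v) ≠ c i := by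
  rw [ssgUtil, div_eq_zero_iff, Nat.cast_eq_zero, Nat.cast_eq_zero, card_eq_zero,
    filter_eq_empty_iff, degree_eq_zero_iff_notMem_support]
  simp only [mem_neighborFinset, mem_support]
  constructor
  · rintro (h | h)
    · exact h
    · exact fun v hv => (h ⟨v, hv⟩).elim
  · exact Or.inl

theorem inv_le_ssgUtil_of_degree_le {i : A} {d : ℕ} (hd : G.degree (σ i) ≤ d)
    (hi : ssgUtil G c σ i ≠ 0) : (d : ℚ)⁻¹ ≤ ssgUtil G c σ i := by
  rw [ssgUtil] at *
  have hsame : #((G.neighborFinset (σ i)).filter (fun v => c (σ.symm v) = c i)) ≠ 0 := by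
    rintro h0
    simp [h0] at hi
  have hpos : 0 < G.degree (σ i) := Nat.pos_of_ne_zero fun h0 => hi (by simp [h0])
  calc (d : ℚ)⁻¹ ≤ 1 / G.degree (σ i) := by
        rw [one_div]; exact inv_anti₀ (by exact_mod_cast hpos) (by exact_mod_cast hd)
    _ ≤ _ := div_le_div_of_nonneg_right (Nat.one_le_cast.2 (Nat.one_le_iff_ne_zero.2 hsame))
        (Nat.cast_nonneg _)

theorem ssgUtil_eq_sub_div (i : A) :
    ssgUtil G c σ i =
      ((G.degree (σ i) : ℚ) - #(ssgOtherColorNbrs G c σ i)) / G.degree (σ i) := by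
  have hsplit := card_filter_add_card_filter_not (s := G.neighborFinset (σ i))
    (fun v => c (σ.symm v) = c i)
  rw [ssgUtil, ssgOtherColorNbrs, ← card_neighborFinset_eq_degree, ← hsplit]
  push_cast
  ring

theorem ssgOtherColorNbrs_ssgSwap_subset {i j : A}
    (hcol : ∀ v, G.Adj (σ i) v → c (σ.symm v) = c j) :
    ssgOtherColorNbrs G c (ssgSwap σ i j) j ⊆ {σ j} := by
  intro v hv
  simp only [ssgOtherColorNbrs, mem_filter, mem_neighborFinset, ssgSwap_apply_right] at hv
  rw [mem_singleton]
  by_contra hvj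
  rw [ssgSwap_symm_apply_of_ne hv.1.ne' hvj] at hv
  exact hv.2 (hcol v hv.1)

theorem ssgWelfare_le_card [Fintype A] : ssgWelfare G c σ ≤ Fintype.card A :=
  calc ssgWelfare G c σ ≤ ∑ _i : A, (1 : ℚ) := sum_le_sum fun i _ => ssgUtil_le_one i
    _ = Fintype.card A := by simp

end SwapGame

section TwoColors

variable {V A : Type*} [Fintype V] [DecidableEq V] {G : SimpleGraph V} [DecidableRel G.Adj]
  {c : A → Fin 2} {σ : A ≃ V}

theorem ssgOtherColorNbrs_subset_of_ssgUtil_eq_zero (heq : ssgLocalEquilibrium G c σ)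
    {i j : A} (hi : ssgUtil G c σ i = 0) (hadj : G.Adj (σ i) (σ j))
    (hdeg : G.degree (σ j) < 2 * G.degree (σ i)) : ssgOtherColorNbrs G c σ j ⊆ {σ i} := by
  have hzero := ssgUtil_eq_zero_iff.1 hi
  have hcij : c i ≠ c j := by simpa using (hzero _ hadj).symm
  have hcol : ∀ v, G.Adj (σ i) v → c (σ.symm v) = c j := fun v hv => by
    have := hzero v hv
    omega
  have hstable : ssgUtil G c (ssgSwap σ i j) i ≤ ssgUtil G c σ i ∨
      ssgUtil G c (ssgSwap σ i j) j ≤ ssgUtil G c σ j := by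
    by_contra! h
    exact heq i j hadj ⟨hcij, h.1, h.2⟩
  intro v hv
  rw [mem_singleton]
  by_contra hvi
  simp only [ssgOtherColorNbrs, mem_filter, mem_neighborFinset] at hv
  rcases hstable with hi' | hj'
  · -- `i` stays isolated at `σ j`, so `v`, whose agent does not move, has colour `c j`
    have h0 : ssgUtil G c (ssgSwap σ i j) i = 0 := le_antisymm (hi ▸ hi') (ssgUtil_nonneg i)
    have := ssgUtil_eq_zero_iff.1 h0 v (by rw [ssgSwap_apply_left]; exact hv.1)
    rw [ssgSwap_symm_apply_of_ne hvi hv.1.ne'] at this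
    omega
  · -- at `σ i` the only unlike neighbour of `j` would be `i`, at `σ j` it has two: `i` and `v`;
    -- as `deg (σ j) < 2 deg (σ i)`, `j` would strictly gain
    have hafter := ssgOtherColorNbrs_ssgSwap_subset hcol
    have hbefore : {σ i, v} ⊆ ssgOtherColorNbrs G c σ j := by
      intro u hu
      simp only [mem_insert, mem_singleton] at hu
      simp only [ssgOtherColorNbrs, mem_filter, mem_neighborFinset]
      rcases hu with rfl | rfl
      · exact ⟨hadj.symm, by simpa using hcij⟩
      · exact hv
    have hm₁ : (#(ssgOtherColorNbrs G c (ssgSwap σ i j) j) : ℚ) ≤ 1 := by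
      exact_mod_cast (card_le_card hafter).trans (card_singleton _).le
    have hm₂ : (2 : ℚ) ≤ #(ssgOtherColorNbrs G c σ j) := by
      exact_mod_cast (card_pair (Ne.symm hvi)).symm.le.trans (card_le_card hbefore)
    have hdi : (0 : ℚ) < G.degree (σ i) := by exact_mod_cast hadj.degree_pos_left
    have hdj : (0 : ℚ) < G.degree (σ j) := by exact_mod_cast hadj.degree_pos_right
    have hdeg' : (G.degree (σ j) : ℚ) < 2 * G.degree (σ i) := by exact_mod_cast hdeg
    rw [ssgUtil_eq_sub_div, ssgUtil_eq_sub_div, ssgSwap_apply_right,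
      div_le_div_iff₀ hdi hdj] at hj'
    nlinarith

end TwoColors

section Grid

variable {h : ℕ} {c : Fin 2 × Fin h → Fin 2} {σ : (Fin 2 × Fin h) ≃ (Fin 2 × Fin h)}

theorem grid4_exists_ssgOtherColorNbrs_eq_singleton (hh : 3 ≤ h)
    (heq : ssgLocalEquilibrium (grid4 2 h) c σ) {i : Fin 2 × Fin h}
    (hi : ssgUtil (grid4 2 h) c σ i = 0) :
    ∃ j, ssgOtherColorNbrs (grid4 2 h) c σ j = {σ i} ∧ (grid4 2 h).degree (σ j) = 3 := by
  obtain ⟨u, hadj, hdeg⟩ := exists_grid4_two_adj_degree_eq_three hh (σ i)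
  rw [← σ.apply_symm_apply u] at hadj hdeg
  refine ⟨σ.symm u, ?_, hdeg⟩
  have hsub := ssgOtherColorNbrs_subset_of_ssgUtil_eq_zero heq hi hadj
    (by have := two_le_grid4_two_degree (by omega) (σ i); omega)
  have hmem : σ i ∈ ssgOtherColorNbrs (grid4 2 h) c σ (σ.symm u) := by
    simp only [ssgOtherColorNbrs, mem_filter, mem_neighborFinset, Equiv.symm_apply_apply]
    exact ⟨hadj.symm, fun hc => ssgUtil_eq_zero_iff.1 hi _ hadj (by simp [hc])⟩
  exact (Finset.Nonempty.subset_singleton_iff ⟨_, hmem⟩).1 hsub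

theorem grid4_card_ssgUtil_eq_zero_le (hh : 3 ≤ h)
    (heq : ssgLocalEquilibrium (grid4 2 h) c σ) :
    #{i | ssgUtil (grid4 2 h) c σ i = 0} ≤ #{i | 2 / 3 ≤ ssgUtil (grid4 2 h) c σ i} := by
  have hpartner : ∀ i ∈ ({i | ssgUtil (grid4 2 h) c σ i = 0} : Finset _),
      ∃ j, ssgOtherColorNbrs (grid4 2 h) c σ j = {σ i} ∧ (grid4 2 h).degree (σ j) = 3 :=
    fun i hi => grid4_exists_ssgOtherColorNbrs_eq_singleton hh heq (mem_filter.1 hi).2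
  choose! f hf using hpartner
  refine card_le_card_of_injOn f (fun i hi => ?_) (fun i₁ hi₁ i₂ hi₂ hf₁₂ => ?_)
  · simp only [coe_filter, mem_univ, true_and, Set.mem_ofPred_eq]
    rw [ssgUtil_eq_sub_div, (hf i hi).1, (hf i hi).2]
    norm_num
  · have := (hf i₁ hi₁).1.symm.trans (hf₁₂ ▸ (hf i₂ hi₂).1)
    exact σ.injective (singleton_injective this)

end Grid

theorem stmt19 (h : ℕ) (hh : 3 ≤ h)
    (c : Fin 2 × Fin h → Fin 2) (σ : (Fin 2 × Fin h) ≃ (Fin 2 × Fin h))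
    (heq : ssgLocalEquilibrium (grid4 2 h) c σ) :
    (Finset.univ.filter
        (fun i : Fin 2 × Fin h => ssgUtil (grid4 2 h) c σ i = 0)).card ≤
      (Finset.univ.filter
        (fun i : Fin 2 × Fin h =>
          (2 : ℚ) / 3 ≤ ssgUtil (grid4 2 h) c σ i)).card ∧
    (2 * (h : ℚ)) / 3 ≤ ssgWelfare (grid4 2 h) c σ ∧
    ∀ σ' : (Fin 2 × Fin h) ≃ (Fin 2 × Fin h),
      ssgWelfare (grid4 2 h) c σ' ≤ 3 * ssgWelfare (grid4 2 h) c σ := by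
  have hzero := grid4_card_ssgUtil_eq_zero_le hh heq
  have hwelfare : (2 * (h : ℚ)) / 3 ≤ ssgWelfare (grid4 2 h) c σ := by
    have hthird :
        ∀ i, ssgUtil (grid4 2 h) c σ i ≠ 0 → 1 / 3 ≤ ssgUtil (grid4 2 h) c σ i :=
      fun i hi => by simpa using inv_le_ssgUtil_of_degree_le (grid4_two_degree_le_three _) hi
    simpa [ssgWelfare] using card_div_three_le_sum _ hthird hzero
  refine ⟨hzero, hwelfare, fun σ' => ?_⟩
  have := ssgWelfare_le_card (G := grid4 2 h) (c := c) (σ := σ')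
  simp only [Fintype.card_prod, Fintype.card_fin, Nat.cast_mul, Nat.cast_ofNat] at this
  linarith
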